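/- arXiv:quant-ph/0508163 — 3 statements merged into one kernel-verified Lean document; each statement's English description precedes it below -/
import Mathlib

section
/- Let A be a real symmetric matrix indexed by (Fin p × Fin q) with nonnegative row sums, nonpositive off-diagonal entries, and trace 1 (i.e., A ∈ S_1), and suppose A_{(i,j),(i',j')} ≠ 0 implies |i − i'| ≤ 1 (A is block tridiagonal). If for every index the row sum of the partial transpose A^pT equals the corresponding row sum of A, then A is separable in ℂ^p ⊗ ℂ^q. -/
open Matrix BigOperators Kronecker
open scoped ComplexOrder

noncomputable section

/-- The `(p,q)`-partial transpose of a matrix indexed by `Fin p × Fin q`: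
`A^pT_{(i,j),(k,l)} = A_{(i,l),(k,j)}`. -/
def ptrans {p q : ℕ} {α : Type*} (A : Matrix (Fin p × Fin q) (Fin p × Fin q) α) :
    Matrix (Fin p × Fin q) (Fin p × Fin q) α :=
  fun x y => A (x.1, y.2) (y.1, x.2)

/-- A density matrix: Hermitian, positive semidefinite, with trace 1. -/
def IsDensityMatrix {n : Type*} [Fintype n] (ρ : Matrix n n ℂ) : Prop :=
  ρ.IsHermitian ∧ ρ.PosSemidef ∧ ρ.trace = 1

/-- Separability in ℂ^p ⊗ ℂ^q : a finite convex combination of Kronecker products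
of density matrices. -/
def SeparableState {p q : ℕ} (A : Matrix (Fin p × Fin q) (Fin p × Fin q) ℂ) : Prop :=
  ∃ (m : ℕ) (c : Fin m → ℝ) (ρ : Fin m → Matrix (Fin p) (Fin p) ℂ)
    (η : Fin m → Matrix (Fin q) (Fin q) ℂ),
    (∀ i, 0 ≤ c i) ∧ (∑ i, c i) = 1 ∧
    (∀ i, IsDensityMatrix (ρ i)) ∧ (∀ i, IsDensityMatrix (η i)) ∧
    A = ∑ i, (c i : ℂ) • (ρ i ⊗ₖ η i)

/-- Separability of a real matrix, viewed as a complex matrix. -/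
def SeparableStateR {p q : ℕ} (A : Matrix (Fin p × Fin q) (Fin p × Fin q) ℝ) : Prop :=
  SeparableState (A.map (fun x => (x : ℂ)))

/-- A square real matrix is line sum symmetric if each row sum equals the
corresponding column sum. -/
def LineSumSymm {q : ℕ} (B : Matrix (Fin q) (Fin q) ℝ) : Prop :=
  ∀ j, (∑ l, B j l) = ∑ l, B l j

/-- A simple circuit matrix: there are distinct indices `i_1, …, i_k` (`k ≥ 1`) with
`C_{i_m i_{m+1}} = 1` (cyclically) and all other entries 0. -/
def IsSimpleCircuit {q : ℕ} (C : Matrix (Fin q) (Fin q) ℝ) : Prop :=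
  ∃ (k : ℕ) (hk : 0 < k) (f : Fin k → Fin q), Function.Injective f ∧
    ∀ a b : Fin q, C a b =
      if ∃ m : Fin k, a = f m ∧ b = f ⟨((m : ℕ) + 1) % k, Nat.mod_lt _ hk⟩ then 1 else 0

/-- The 2q×2q block matrix `[[A11, A12], [A21, A22]]` indexed by `Fin 2 × Fin q`. -/
def twoBlock {q : ℕ} {α : Type*} (A11 A12 A21 A22 : Matrix (Fin q) (Fin q) α) :
    Matrix (Fin 2 × Fin q) (Fin 2 × Fin q) α :=
  fun a b =>
    if a.1 = 0 then (if b.1 = 0 then A11 a.2 b.2 else A12 a.2 b.2)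
    else (if b.1 = 0 then A21 a.2 b.2 else A22 a.2 b.2)

/-- The q×q block `A^{i,k}` of a matrix indexed by `Fin p × Fin q`. -/
def blockOf {p q : ℕ} (A : Matrix (Fin p × Fin q) (Fin p × Fin q) ℝ) (i k : Fin p) :
    Matrix (Fin q) (Fin q) ℝ :=
  fun j l => A (i, j) (k, l)

namespace Stmt11

def outerC {n : ℕ} (v : Fin n → ℂ) : Matrix (Fin n) (Fin n) ℂ :=
  fun a b => v a * (starRingEnd ℂ) (v b)

def SepC {p q : ℕ} (M : Matrix (Fin p × Fin q) (Fin p × Fin q) ℂ) : Prop :=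
  ∃ (m : ℕ) (v : Fin m → Fin p → ℂ) (w : Fin m → Fin q → ℂ),
    M = ∑ t, (outerC (v t)) ⊗ₖ (outerC (w t))

variable {p q : ℕ}

lemma outerC_posSemidef {n : ℕ} (v : Fin n → ℂ) : (outerC v).PosSemidef := by
  have : outerC v = (Matrix.replicateCol (Fin 1) v) * (Matrix.replicateCol (Fin 1) v)ᴴ := by
    ext a b
    simp [outerC, Matrix.mul_apply, Matrix.replicateCol, Matrix.conjTranspose_apply]
  rw [this]
  exact Matrix.posSemidef_self_mul_conjTranspose _

lemma outerC_trace {n : ℕ} (v : Fin n → ℂ) :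
    (outerC v).trace = ((∑ a, Complex.normSq (v a) : ℝ) : ℂ) := by
  simp [Matrix.trace, Matrix.diag, outerC, Complex.mul_conj]

lemma outerC_smul {n : ℕ} (s : ℝ) (v : Fin n → ℂ) :
    outerC (fun a => (s : ℂ) * v a) = ((s^2 : ℝ) : ℂ) • outerC v := by
  ext a b
  simp [outerC, Matrix.smul_apply]
  push_cast
  ring

lemma sepC_zero : SepC (0 : Matrix (Fin p × Fin q) (Fin p × Fin q) ℂ) :=
  ⟨0, ![], ![], by simp⟩

lemma sepC_add {M N : Matrix (Fin p × Fin q) (Fin p × Fin q) ℂ}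
    (hM : SepC M) (hN : SepC N) : SepC (M + N) := by
  obtain ⟨m, v, w, rfl⟩ := hM
  obtain ⟨n, v', w', rfl⟩ := hN
  refine ⟨m + n, Fin.addCases v v', Fin.addCases w w', ?_⟩
  rw [Fin.sum_univ_add]
  simp

lemma sepC_smul {M : Matrix (Fin p × Fin q) (Fin p × Fin q) ℂ}
    (c : ℝ) (hc : 0 ≤ c) (hM : SepC M) : SepC ((c : ℂ) • M) := by
  obtain ⟨m, v, w, rfl⟩ := hM
  refine ⟨m, fun t a => (Real.sqrt c : ℂ) * v t a, w, ?_⟩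
  rw [Finset.smul_sum]
  refine Finset.sum_congr rfl (fun t _ => ?_)
  rw [outerC_smul, Matrix.smul_kronecker, Real.sq_sqrt hc]

lemma sepC_sum {ι : Type*} (s : Finset ι) (f : ι → Matrix (Fin p × Fin q) (Fin p × Fin q) ℂ)
    (h : ∀ i ∈ s, SepC (f i)) : SepC (∑ i ∈ s, f i) :=
  Finset.sum_induction f SepC (fun _ _ => sepC_add) sepC_zero h

lemma sep_of_sepC {A : Matrix (Fin p × Fin q) (Fin p × Fin q) ℂ}
    (hp : 0 < p) (hq : 0 < q) (hA : SepC A) (htr : A.trace = 1) : SeparableState A := by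
  obtain ⟨m, v, w, rfl⟩ := hA
  set nv : Fin m → ℝ := fun t => ∑ a, Complex.normSq (v t a) with hnv
  set nw : Fin m → ℝ := fun t => ∑ a, Complex.normSq (w t a) with hnw
  have hnv0 : ∀ t, 0 ≤ nv t := fun t => Finset.sum_nonneg fun a _ => Complex.normSq_nonneg _
  have hnw0 : ∀ t, 0 ≤ nw t := fun t => Finset.sum_nonneg fun a _ => Complex.normSq_nonneg _
  have e0p : Fin p := ⟨0, hp⟩
  have e0q : Fin q := ⟨0, hq⟩
  have stdden : ∀ (n : ℕ) (a : Fin n), IsDensityMatrix (outerC (fun b => if b = a then 1 else 0)) := by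
    intro n a
    refine ⟨(outerC_posSemidef _).1, outerC_posSemidef _, ?_⟩
    rw [outerC_trace]
    norm_num
  -- normalized vectors
  have key : ∀ (n : ℕ) (u : Fin n → ℂ), (∑ a, Complex.normSq (u a)) ≠ 0 →
      IsDensityMatrix (outerC (fun a => ((Real.sqrt (∑ a, Complex.normSq (u a)))⁻¹ : ℂ) * u a)) := by
    intro n u hu
    refine ⟨(outerC_posSemidef _).1, outerC_posSemidef _, ?_⟩
    rw [show (fun a => ((Real.sqrt (∑ a, Complex.normSq (u a)))⁻¹ : ℂ) * u a)
        = (fun a => (((Real.sqrt (∑ a, Complex.normSq (u a)))⁻¹ : ℝ) : ℂ) * u a) by push_cast; rfl,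
      outerC_smul, Matrix.trace_smul, outerC_trace]
    have h1 : 0 ≤ (∑ a, Complex.normSq (u a)) := Finset.sum_nonneg fun a _ => Complex.normSq_nonneg _
    rw [smul_eq_mul, ← Complex.ofReal_mul]
    rw [show ((Real.sqrt (∑ a, Complex.normSq (u a)))⁻¹)^2 * (∑ a, Complex.normSq (u a))
        = 1 by rw [inv_pow, Real.sq_sqrt h1, inv_mul_cancel₀ hu]]
    norm_num
  classical
  refine ⟨m, fun t => nv t * nw t,
    fun t => if h : nv t = 0 then outerC (fun b => if b = e0p then 1 else 0)
             else outerC (fun a => ((Real.sqrt (nv t) : ℝ)⁻¹ : ℂ) * v t a),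
    fun t => if h : nw t = 0 then outerC (fun b => if b = e0q then 1 else 0)
             else outerC (fun a => ((Real.sqrt (nw t) : ℝ)⁻¹ : ℂ) * w t a), ?_, ?_, ?_, ?_, ?_⟩
  · intro t; exact mul_nonneg (hnv0 t) (hnw0 t)
  · rw [Matrix.trace_sum] at htr
    simp_rw [Matrix.trace_kronecker, outerC_trace, ← Complex.ofReal_mul] at htr
    rw [← Complex.ofReal_sum] at htr
    exact_mod_cast htr
  · intro t; dsimp only
    split
    · exact stdden p e0p
    · exact key p (v t) (by assumption)
  · intro t; dsimp only
    split
    · exact stdden q e0q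
    · exact key q (w t) (by assumption)
  · refine (Finset.sum_congr rfl fun t _ => ?_).symm
    beta_reduce
    by_cases hv : nv t = 0
    · have hv0 : v t = 0 := by
        funext a
        have := (Finset.sum_eq_zero_iff_of_nonneg (fun a _ => Complex.normSq_nonneg (v t a))).mp hv a (Finset.mem_univ a)
        exact Complex.normSq_eq_zero.mp this
      have : outerC (v t) = 0 := by ext a b; simp [outerC, hv0]
      rw [this, Matrix.zero_kronecker, hv]
      simp
    · by_cases hw : nw t = 0
      · have hw0 : w t = 0 := by
          funext a
          have := (Finset.sum_eq_zero_iff_of_nonneg (fun a _ => Complex.normSq_nonneg (w t a))).mp hw a (Finset.mem_univ a)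
          exact Complex.normSq_eq_zero.mp this
        have : outerC (w t) = 0 := by ext a b; simp [outerC, hw0]
        rw [this, Matrix.kronecker_zero, hw]
        simp
      · rw [dif_neg hv, dif_neg hw]
        have c1 : (((Real.sqrt (nv t) : ℝ)⁻¹ : ℂ)) = (((Real.sqrt (nv t))⁻¹ : ℝ) : ℂ) := by push_cast; rfl
        have c2 : (((Real.sqrt (nw t) : ℝ)⁻¹ : ℂ)) = (((Real.sqrt (nw t))⁻¹ : ℝ) : ℂ) := by push_cast; rfl
        simp_rw [c1, c2, outerC_smul, Matrix.smul_kronecker, Matrix.kronecker_smul, smul_smul]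
        have h1 : ((nv t * nw t : ℝ) : ℂ) * ((((Real.sqrt (nv t))⁻¹^2 : ℝ) : ℂ) * (((Real.sqrt (nw t))⁻¹^2 : ℝ) : ℂ)) = 1 := by
          rw [← Complex.ofReal_mul, ← Complex.ofReal_mul]
          norm_cast
          rw [inv_pow, Real.sq_sqrt (hnv0 t), inv_pow, Real.sq_sqrt (hnw0 t)]
          field_simp
        rw [h1, one_smul]
def SepCR {p q : ℕ} (M : Matrix (Fin p × Fin q) (Fin p × Fin q) ℝ) : Prop :=
  SepC (M.map (fun x => (x : ℂ)))

lemma sepCR_zero : SepCR (0 : Matrix (Fin p × Fin q) (Fin p × Fin q) ℝ) := by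
  have : (0 : Matrix (Fin p × Fin q) (Fin p × Fin q) ℝ).map (fun x => (x:ℂ)) = 0 := by
    ext x y; simp
  rw [SepCR, this]; exact sepC_zero

lemma sepCR_add {M N : Matrix (Fin p × Fin q) (Fin p × Fin q) ℝ}
    (hM : SepCR M) (hN : SepCR N) : SepCR (M + N) := by
  have : (M + N).map (fun x => (x:ℂ)) = M.map (fun x => (x:ℂ)) + N.map (fun x => (x:ℂ)) := by
    ext x y; simp
  rw [SepCR, this]; exact sepC_add hM hN

lemma sepCR_smul {M : Matrix (Fin p × Fin q) (Fin p × Fin q) ℝ}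
    (c : ℝ) (hc : 0 ≤ c) (hM : SepCR M) : SepCR (c • M) := by
  have : (c • M).map (fun x => (x:ℂ)) = (c : ℂ) • M.map (fun x => (x:ℂ)) := by
    ext x y; simp
  rw [SepCR, this]; exact sepC_smul c hc hM

lemma sepCR_sum {ι : Type*} (s : Finset ι) (f : ι → Matrix (Fin p × Fin q) (Fin p × Fin q) ℝ)
    (h : ∀ i ∈ s, SepCR (f i)) : SepCR (∑ i ∈ s, f i) :=
  Finset.sum_induction f SepCR (fun _ _ => sepCR_add) sepCR_zero h

lemma sepCR_outer (v : Fin p → ℝ) (w : Fin q → ℝ) :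
    SepCR (Matrix.of (fun x y : Fin p × Fin q => (v x.1 * w x.2) * (v y.1 * w y.2))) := by
  refine ⟨1, fun _ a => (v a : ℂ), fun _ j => (w j : ℂ), ?_⟩
  rw [Fin.sum_univ_one]
  ext ⟨a, j⟩ ⟨b, l⟩
  simp [outerC, Matrix.kroneckerMap_apply, Matrix.map_apply, Complex.conj_ofReal]
  push_cast
  ring

/-- zeta sum -/
lemma zsum (k : ℕ) (hk : 0 < k) {ζ : ℂ} (hζ : IsPrimitiveRoot ζ k) (d : ℤ) :
    ∑ t ∈ Finset.range k, ζ ^ (d * (t : ℤ)) = if (k:ℤ) ∣ d then (k : ℂ) else 0 := by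
  have hcalc : ∀ t : ℕ, ζ ^ (d * (t : ℤ)) = (ζ ^ d) ^ t := by
    intro t
    rw [_root_.zpow_mul, zpow_natCast]
  simp_rw [hcalc]
  by_cases h : (k:ℤ) ∣ d
  · have h1 : ζ ^ d = 1 := (hζ.zpow_eq_one_iff_dvd d).mpr h
    simp [h1, h]
  · have h1 : ζ ^ d ≠ 1 := fun hh => h ((hζ.zpow_eq_one_iff_dvd d).mp hh)
    rw [geom_sum_eq h1, if_neg h]
    have h2 : (ζ ^ d) ^ k = 1 := by
      rw [← zpow_natCast (ζ ^ d) k, ← _root_.zpow_mul, mul_comm, _root_.zpow_mul, zpow_natCast,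
        hζ.pow_eq_one, _root_.one_zpow]
    rw [h2, sub_self, zero_div]

lemma dvd_iff_eq (k : ℕ) (m n : Fin k) : (k:ℤ) ∣ ((n:ℤ) - (m:ℤ)) ↔ m = n := by
  constructor
  · intro h
    have h2 := n.2; have h3 := m.2
    have := Int.eq_zero_of_abs_lt_dvd h (abs_lt.mpr ⟨by omega, by omega⟩)
    apply Fin.ext; omega
  · rintro rfl; simp

lemma dvd_iff_succ (k : ℕ) (m n : Fin k) :
    (k:ℤ) ∣ ((n:ℤ) - (m:ℤ) - 1) ↔ (n:ℕ) = ((m:ℕ) + 1) % k := by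
  have h2 := n.2; have h3 := m.2
  constructor
  · rintro ⟨c, hc⟩
    have hk : 0 < k := n.pos
    have hc0 : c = 0 ∨ c = -1 := by
      by_contra hcc
      push_neg at hcc
      rcases lt_or_ge c (-1) with h | h
      · have : (k:ℤ) * c ≤ (k:ℤ) * (-2) := by
          apply mul_le_mul_of_nonneg_left (by omega) (by positivity)
        omega
      · have h4 : 1 ≤ c := by omega
        have : (k:ℤ) * 1 ≤ (k:ℤ) * c := by
          apply mul_le_mul_of_nonneg_left h4 (by positivity)
        omega
    rcases hc0 with rfl | rfl
    · have hn : (n:ℕ) = (m:ℕ) + 1 := by omega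
      rw [hn, Nat.mod_eq_of_lt (by omega)]
    · have hm : (m:ℕ) + 1 = k := by omega
      have hn : (n:ℕ) = 0 := by omega
      rw [hn, hm, Nat.mod_self]
  · intro h
    rcases Nat.lt_or_ge ((m:ℕ)+1) k with hlt | hge
    · rw [Nat.mod_eq_of_lt hlt] at h
      exact ⟨0, by omega⟩
    · have hm : (m:ℕ) + 1 = k := by omega
      rw [hm, Nat.mod_self] at h
      exact ⟨-1, by omega⟩

def scc {k : ℕ} (t : Fin k) : Fin k := ⟨((t:ℕ)+1) % k, Nat.mod_lt _ t.pos⟩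

lemma scc_bijective {k : ℕ} : Function.Bijective (scc (k := k)) := by
  rw [← Finite.injective_iff_bijective]
  intro a b h
  have h1 := congrArg Fin.val h
  simp only [scc] at h1
  have h2 := a.2; have h3 := b.2
  apply Fin.ext
  rcases Nat.lt_or_ge ((a:ℕ)+1) k with ha | ha <;>
    rcases Nat.lt_or_ge ((b:ℕ)+1) k with hb | hb
  · rw [Nat.mod_eq_of_lt ha, Nat.mod_eq_of_lt hb] at h1; omega
  · rw [Nat.mod_eq_of_lt ha, show (b:ℕ)+1 = k by omega, Nat.mod_self] at h1; omega
  · rw [Nat.mod_eq_of_lt hb, show (a:ℕ)+1 = k by omega, Nat.mod_self] at h1; omega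
  · omega

lemma scc_dvd (k : ℕ) (m n : Fin k) :
    (k:ℤ) ∣ ((n:ℤ) - (m:ℤ) - 1) ↔ n = scc m := by
  rw [dvd_iff_succ]
  constructor
  · intro h; exact Fin.ext h
  · intro h; rw [h]; rfl
def gadget {q : ℕ} (B : Matrix (Fin q) (Fin q) ℝ) : Matrix (Fin 2 × Fin q) (Fin 2 × Fin q) ℝ :=
  twoBlock (Matrix.diagonal fun j => ∑ l, B j l) (-B) (-Bᵀ) (Matrix.diagonal fun j => ∑ l, B l j)

def walkMat {k q : ℕ} (g : Fin k → Fin q) : Matrix (Fin q) (Fin q) ℝ :=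
  fun j l => ∑ m : Fin k, if g m = j ∧ g (scc m) = l then 1 else 0

lemma walk_row {k q : ℕ} (g : Fin k → Fin q) (j : Fin q) :
    ∑ l, walkMat g j l = ∑ m : Fin k, (if g m = j then (1:ℝ) else 0) := by
  unfold walkMat
  rw [Finset.sum_comm]
  refine Finset.sum_congr rfl fun m _ => ?_
  by_cases h : g m = j <;> simp [h, Finset.sum_ite_eq]

lemma walk_col {k q : ℕ} (g : Fin k → Fin q) (j : Fin q) :
    ∑ l, walkMat g l j = ∑ m : Fin k, (if g m = j then (1:ℝ) else 0) := by
  unfold walkMat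
  rw [Finset.sum_comm]
  have h1 : ∀ m : Fin k, (∑ l, if g m = l ∧ g (scc m) = j then (1:ℝ) else 0)
      = if g (scc m) = j then (1:ℝ) else 0 := by
    intro m
    by_cases h : g (scc m) = j <;> simp [h, Finset.sum_ite_eq]
  simp_rw [h1]
  exact scc_bijective.sum_comp (fun x => if g x = j then (1:ℝ) else 0)

lemma sepCR_gadget_walk {q k : ℕ} (hk : 0 < k) (g : Fin k → Fin q) :
    SepCR (gadget (walkMat g)) := by
  classical
  set ζ : ℂ := Complex.exp (2 * Real.pi * Complex.I / k) with hζdef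
  have hζ : IsPrimitiveRoot ζ k := Complex.isPrimitiveRoot_exp k hk.ne'
  have hζ0 : ζ ≠ 0 := hζ.ne_zero hk.ne'
  have hζ1 : ζ * (starRingEnd ℂ) ζ = 1 := by
    rw [Complex.mul_conj]
    have habs : ‖ζ‖ = 1 := by
      rw [hζdef, show (2 * (Real.pi:ℂ) * Complex.I / k) = ((2 * Real.pi / k : ℝ) : ℂ) * Complex.I by push_cast; ring]
      exact Complex.norm_exp_ofReal_mul_I _
    rw [Complex.normSq_eq_norm_sq, habs]
    norm_num
  have hconj : (starRingEnd ℂ) ζ = ζ⁻¹ := eq_inv_of_mul_eq_one_left (by rw [mul_comm]; exact hζ1)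
  set v : Fin k → Fin 2 → ℂ := fun t => ![1, -ζ ^ (t:ℕ)] with hv
  set w : Fin k → Fin q → ℂ :=
    fun t j => ∑ m : Fin k, if g m = j then ζ ^ (-((t:ℕ):ℤ) * ((m:ℕ):ℤ)) else 0 with hw
  have conj_w : ∀ (t : Fin k) (l : Fin q), (starRingEnd ℂ) (w t l)
      = ∑ n : Fin k, if g n = l then ζ ^ (((t:ℕ):ℤ) * ((n:ℕ):ℤ)) else 0 := by
    intro t l
    rw [hw]
    simp only [map_sum]
    refine Finset.sum_congr rfl fun n _ => ?_
    split_ifs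
    · rw [map_zpow₀, hconj, _root_.inv_zpow, ← _root_.zpow_neg]
      congr 1
      ring
    · rw [map_zero]
  have main : ((k:ℝ) : ℂ) • (gadget (walkMat g)).map (fun x => (x:ℂ))
      = ∑ t, outerC (v t) ⊗ₖ outerC (w t) := by
    ext ⟨a, j⟩ ⟨b, l⟩
    rw [Matrix.smul_apply, Matrix.map_apply, Matrix.sum_apply]
    have hrhs : ∀ t : Fin k, (outerC (v t) ⊗ₖ outerC (w t)) (a,j) (b,l)
        = (v t a * (starRingEnd ℂ) (v t b)) * (w t j * (starRingEnd ℂ) (w t l)) := by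
      intro t; rfl
    simp_rw [hrhs]
    -- key inner sum computation, uniform in sign s and offset d
    have inner : ∀ (sgn : ℂ) (e : ℤ), (∀ t : Fin k, v t a * (starRingEnd ℂ) (v t b) = sgn * ζ ^ (e * ((t:ℕ):ℤ))) →
        ∑ t : Fin k, (v t a * (starRingEnd ℂ) (v t b)) * (w t j * (starRingEnd ℂ) (w t l))
        = ∑ m : Fin k, ∑ n : Fin k, (if g m = j then (1:ℂ) else 0) * (if g n = l then (1:ℂ) else 0)
            * (sgn * (if (k:ℤ) ∣ (e + ((n:ℕ):ℤ) - ((m:ℕ):ℤ)) then (k:ℂ) else 0)) := by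
      intro sgn e hva
      have step1 : ∀ t : Fin k, (v t a * (starRingEnd ℂ) (v t b)) * (w t j * (starRingEnd ℂ) (w t l))
          = ∑ m : Fin k, ∑ n : Fin k, (if g m = j then (1:ℂ) else 0) * (if g n = l then (1:ℂ) else 0)
              * (sgn * ζ ^ ((e + ((n:ℕ):ℤ) - ((m:ℕ):ℤ)) * ((t:ℕ):ℤ))) := by
        intro t
        rw [hva t, hw, conj_w, Finset.sum_mul_sum]
        rw [Finset.mul_sum]
        refine Finset.sum_congr rfl fun m _ => ?_
        rw [Finset.mul_sum]
        refine Finset.sum_congr rfl fun n _ => ?_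
        split_ifs with h1 h2 <;> [skip; simp; simp; simp]
        simp only [one_mul]
        rw [mul_assoc, ← zpow_add₀ hζ0, ← zpow_add₀ hζ0]
        congr 1
        ring
      simp_rw [step1]
      rw [Finset.sum_comm]
      refine Finset.sum_congr rfl fun m _ => ?_
      rw [Finset.sum_comm]
      refine Finset.sum_congr rfl fun n _ => ?_
      rw [← Finset.mul_sum]
      congr 1
      rw [← Finset.mul_sum]
      congr 1
      rw [show ∑ t : Fin k, ζ ^ ((e + ((n:ℕ):ℤ) - ((m:ℕ):ℤ)) * ((t:ℕ):ℤ))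
          = ∑ t ∈ Finset.range k, ζ ^ ((e + ((n:ℕ):ℤ) - ((m:ℕ):ℤ)) * (t:ℤ)) from
        Fin.sum_univ_eq_sum_range (fun t : ℕ => ζ ^ ((e + ((n:ℕ):ℤ) - ((m:ℕ):ℤ)) * (t:ℤ))) k]
      exact zsum k hk hζ _
    have hLdiag1 : gadget (walkMat g) (0, j) (0, l)
        = (if j = l then ∑ m : Fin k, (if g m = j then (1:ℝ) else 0) else 0) := by
      have h0 : gadget (walkMat g) (0, j) (0, l)
          = Matrix.diagonal (fun j => ∑ l, walkMat g j l) j l := by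
        simp [gadget, twoBlock]
      rw [h0, Matrix.diagonal_apply]
      split_ifs with h
      · subst h; exact walk_row g j
      · rfl
    have hLdiag2 : gadget (walkMat g) (1, j) (1, l)
        = (if j = l then ∑ m : Fin k, (if g m = j then (1:ℝ) else 0) else 0) := by
      have h0 : gadget (walkMat g) (1, j) (1, l)
          = Matrix.diagonal (fun j => ∑ l, walkMat g l j) j l := by
        simp [gadget, twoBlock, Fin.one_eq_zero_iff]
      rw [h0, Matrix.diagonal_apply]
      split_ifs with h
      · subst h; exact walk_col g j
      · rfl
    have diagfinish : ((k:ℝ):ℂ) • ((if j = l then ∑ m : Fin k, (if g m = j then (1:ℝ) else 0) else 0 : ℝ) : ℂ)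
        = ∑ m : Fin k, ∑ n : Fin k, (if g m = j then (1:ℂ) else 0) * (if g n = l then (1:ℂ) else 0)
            * ((1:ℂ) * (if (k:ℤ) ∣ ((0:ℤ) + ((n:ℕ):ℤ) - ((m:ℕ):ℤ)) then (k:ℂ) else 0)) := by
      simp_rw [one_mul, show ∀ m n : Fin k, ((0:ℤ) + ((n:ℕ):ℤ) - ((m:ℕ):ℤ)) = ((n:ℕ):ℤ) - ((m:ℕ):ℤ) from fun m n => by ring,
        dvd_iff_eq]
      have hin : ∀ m : Fin k, (∑ n : Fin k, (if g m = j then (1:ℂ) else 0) * (if g n = l then (1:ℂ) else 0)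
          * (if m = n then (k:ℂ) else 0))
          = (if g m = j then (1:ℂ) else 0) * (if g m = l then (1:ℂ) else 0) * (k:ℂ) := by
        intro m
        rw [Finset.sum_eq_single m]
        · simp
        · intro b _ hb; simp [Ne.symm hb]
        · intro h; exact absurd (Finset.mem_univ m) h
      simp_rw [hin]
      rw [smul_eq_mul]
      split_ifs with hjl
      · subst hjl
        rw [Complex.ofReal_sum, Finset.mul_sum]
        refine Finset.sum_congr rfl fun m _ => ?_
        split_ifs <;> simp <;> ring
      · rw [Complex.ofReal_zero, mul_zero]
        symm
        refine Finset.sum_eq_zero fun m _ => ?_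
        by_cases h1 : g m = j <;> by_cases h2 : g m = l
        · exact absurd (h1.symm.trans h2) hjl
        all_goals simp [h1, h2, hjl]
        all_goals exact fun h => absurd h.symm hjl
    have fin2 : ∀ x : Fin 2, x = 0 ∨ x = 1 := by decide
    rcases fin2 a with rfl | rfl <;> rcases fin2 b with rfl | rfl
    · -- (0,0)
      have hva : ∀ t : Fin k, v t 0 * (starRingEnd ℂ) (v t 0) = 1 * ζ ^ ((0:ℤ) * ((t:ℕ):ℤ)) := by
        intro t; simp [hv]
      rw [inner 1 0 hva, hLdiag1]
      exact diagfinish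
    · -- (0,1)
      have hva : ∀ t : Fin k, v t 0 * (starRingEnd ℂ) (v t 1) = (-1) * ζ ^ ((-1:ℤ) * ((t:ℕ):ℤ)) := by
        intro t
        simp only [hv, Matrix.cons_val_zero, Matrix.cons_val_one, Matrix.head_cons, one_mul,
          map_neg, map_pow, hconj]
        rw [← zpow_natCast ζ⁻¹, _root_.inv_zpow, ← _root_.zpow_neg, neg_one_mul]
        congr 1
        ring
      rw [inner (-1) (-1) hva]
      have hL : gadget (walkMat g) (0, j) (1, l) = -(walkMat g j l) := by
        simp [gadget, twoBlock, Fin.one_eq_zero_iff]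
      rw [hL]
      simp_rw [show ∀ m n : Fin k, ((-1:ℤ) + ((n:ℕ):ℤ) - ((m:ℕ):ℤ)) = ((n:ℕ):ℤ) - ((m:ℕ):ℤ) - 1 from fun m n => by ring,
        scc_dvd]
      have hin : ∀ m : Fin k, (∑ n : Fin k, (if g m = j then (1:ℂ) else 0) * (if g n = l then (1:ℂ) else 0)
          * ((-1) * (if n = scc m then (k:ℂ) else 0)))
          = (if g m = j then (1:ℂ) else 0) * (if g (scc m) = l then (1:ℂ) else 0) * (-(k:ℂ)) := by
        intro m
        rw [Finset.sum_eq_single (scc m)]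
        · simp
        · intro b _ hb; simp [hb]
        · intro h; exact absurd (Finset.mem_univ _) h
      simp_rw [hin]
      rw [smul_eq_mul]
      simp only [walkMat]
      rw [Complex.ofReal_neg, Complex.ofReal_sum, mul_neg, Finset.mul_sum, ← Finset.sum_neg_distrib]
      refine Finset.sum_congr rfl fun m _ => ?_
      by_cases h1 : g m = j <;> by_cases h2 : g (scc m) = l <;> simp [h1, h2]
    · -- (1,0)
      have hva : ∀ t : Fin k, v t 1 * (starRingEnd ℂ) (v t 0) = (-1) * ζ ^ ((1:ℤ) * ((t:ℕ):ℤ)) := by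
        intro t
        simp only [hv, Matrix.cons_val_zero, Matrix.cons_val_one, Matrix.head_cons]
        rw [_root_.map_one, mul_one, neg_one_mul, one_mul, ← zpow_natCast ζ]
      rw [inner (-1) 1 hva]
      have hL : gadget (walkMat g) (1, j) (0, l) = -(walkMat g l j) := by
        simp [gadget, twoBlock, Fin.one_eq_zero_iff]
      rw [hL]
      simp_rw [show ∀ m n : Fin k, ((1:ℤ) + ((n:ℕ):ℤ) - ((m:ℕ):ℤ)) = -(((m:ℕ):ℤ) - ((n:ℕ):ℤ) - 1) from fun m n => by ring,
        dvd_neg, scc_dvd]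
      rw [Finset.sum_comm]
      have hin : ∀ n : Fin k, (∑ m : Fin k, (if g m = j then (1:ℂ) else 0) * (if g n = l then (1:ℂ) else 0)
          * ((-1) * (if m = scc n then (k:ℂ) else 0)))
          = (if g n = l then (1:ℂ) else 0) * (if g (scc n) = j then (1:ℂ) else 0) * (-(k:ℂ)) := by
        intro n
        rw [Finset.sum_eq_single (scc n)]
        · simp
          split_ifs <;> rfl
        · intro b _ hb; simp [hb]
        · intro h; exact absurd (Finset.mem_univ _) h
      simp_rw [hin]
      rw [smul_eq_mul]
      simp only [walkMat]
      rw [Complex.ofReal_neg, Complex.ofReal_sum, mul_neg, Finset.mul_sum, ← Finset.sum_neg_distrib]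
      refine Finset.sum_congr rfl fun n _ => ?_
      by_cases h1 : g n = l <;> by_cases h2 : g (scc n) = j <;> simp [h1, h2]
    · -- (1,1)
      have hva : ∀ t : Fin k, v t 1 * (starRingEnd ℂ) (v t 1) = 1 * ζ ^ ((0:ℤ) * ((t:ℕ):ℤ)) := by
        intro t
        simp only [hv, Matrix.cons_val_one, Matrix.head_cons, map_neg, map_pow, neg_mul_neg,
          ← mul_pow, hζ1, one_pow]
        simp
        rw [← mul_pow, hζ1, one_pow]
      rw [inner 1 0 hva, hLdiag2]
      exact diagfinish
  have hsep : SepC (((k:ℝ) : ℂ) • (gadget (walkMat g)).map (fun x => (x:ℂ))) := by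
    rw [main]; exact ⟨k, v, w, rfl⟩
  have := sepC_smul ((k:ℝ)⁻¹) (by positivity) hsep
  rw [smul_smul] at this
  rw [show (((k:ℝ)⁻¹ : ℝ) : ℂ) * ((k:ℝ) : ℂ) = 1 by
    push_cast; field_simp] at this
  rw [one_smul] at this
  exact this
lemma gadget_add {q : ℕ} (B C : Matrix (Fin q) (Fin q) ℝ) :
    gadget (B + C) = gadget B + gadget C := by
  ext ⟨a, j⟩ ⟨b, l⟩
  simp only [gadget, twoBlock, Matrix.add_apply, Matrix.neg_apply, Matrix.transpose_apply,
    Matrix.diagonal_apply]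
  split_ifs <;> simp [Finset.sum_add_distrib] <;> ring

lemma gadget_smul {q : ℕ} (c : ℝ) (B : Matrix (Fin q) (Fin q) ℝ) :
    gadget (c • B) = c • gadget B := by
  ext ⟨a, j⟩ ⟨b, l⟩
  simp only [gadget, twoBlock, Matrix.smul_apply, Matrix.neg_apply, Matrix.transpose_apply,
    Matrix.diagonal_apply, smul_eq_mul]
  split_ifs <;> simp [Finset.mul_sum] <;> ring

lemma gadget_zero {q : ℕ} : gadget (0 : Matrix (Fin q) (Fin q) ℝ) = 0 := by
  ext ⟨a, j⟩ ⟨b, l⟩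
  simp only [gadget, twoBlock, Matrix.diagonal_apply, Matrix.neg_apply, Matrix.transpose_apply,
    Matrix.zero_apply, Finset.sum_const_zero, neg_zero]
  split_ifs <;> rfl

lemma sepCR_gadget_aux {q : ℕ} : ∀ (N : ℕ) (B : Matrix (Fin q) (Fin q) ℝ),
    (Finset.univ.filter (fun e : Fin q × Fin q => B e.1 e.2 ≠ 0)).card ≤ N →
    (∀ j l, 0 ≤ B j l) → LineSumSymm B → SepCR (gadget B) := by
  intro N
  induction N with
  | zero =>
    intro B hcard hB hLSS
    have hBz : B = 0 := by
      ext j l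
      simp only [Matrix.zero_apply]
      by_contra h
      have hmem : ((j,l) : Fin q × Fin q) ∈
          Finset.univ.filter (fun e : Fin q × Fin q => B e.1 e.2 ≠ 0) := by simp [h]
      have := Finset.card_pos.mpr ⟨_, hmem⟩
      omega
    rw [hBz, gadget_zero]
    exact sepCR_zero
  | succ N ih =>
    intro B hcard hB hLSS
    by_cases hB0 : B = 0
    · rw [hB0, gadget_zero]; exact sepCR_zero
    have hex : ∃ j l, 0 < B j l := by
      by_contra h
      push_neg at h
      apply hB0
      ext j l
      simp only [Matrix.zero_apply]
      exact le_antisymm (h j l) (hB j l)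
    obtain ⟨j₀, l₀, hjl⟩ := hex
    classical
    set rs : Fin q → ℝ := fun j => ∑ l, B j l with hrs
    have hstep : ∀ j : {j : Fin q // 0 < rs j}, ∃ l : {j : Fin q // 0 < rs j}, 0 < B j.1 l.1 := by
      rintro ⟨j, hj⟩
      have hexl : ∃ l, 0 < B j l := by
        by_contra h
        push_neg at h
        have : rs j ≤ 0 := Finset.sum_nonpos (fun l _ => h l)
        linarith
      obtain ⟨l, hl⟩ := hexl
      refine ⟨⟨l, ?_⟩, hl⟩
      have hcol : B j l ≤ ∑ m, B m l :=
        Finset.single_le_sum (fun m _ => hB m l) (Finset.mem_univ j)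
      have : rs l = ∑ m, B m l := hLSS l
      linarith
    choose nxt hnxt using hstep
    have hj₀ : 0 < rs j₀ := by
      have : B j₀ l₀ ≤ rs j₀ :=
        Finset.single_le_sum (fun l _ => hB j₀ l) (Finset.mem_univ l₀)
      linarith
    set x : ℕ → {j : Fin q // 0 < rs j} := fun n => nxt^[n] ⟨j₀, hj₀⟩ with hx
    have hxs : ∀ n, 0 < B (x n).1 (x (n+1)).1 := by
      intro n
      have h1 : x (n+1) = nxt (x n) := Function.iterate_succ_apply' nxt n _
      rw [h1]
      exact hnxt (x n)
    obtain ⟨a, b, hab, hxab0⟩ := Finite.exists_ne_map_eq_of_infinite x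
    obtain ⟨a, b, hlt, hxab⟩ : ∃ a b, a < b ∧ x a = x b := by
      rcases lt_or_gt_of_ne hab with h | h
      exacts [⟨a, b, h, hxab0⟩, ⟨b, a, h, hxab0.symm⟩]
    set k := b - a with hk
    have hk0 : 0 < k := by omega
    set g : Fin k → Fin q := fun t => (x (a + (t:ℕ))).1 with hg
    have hedge : ∀ t : Fin k, 0 < B (g t) (g (scc t)) := by
      intro t
      have h2 := t.2
      have hgs : g (scc t) = (x (a + ((scc t) : ℕ))).1 := rfl
      by_cases hcase : (t:ℕ)+1 = k
      · have hs : ((scc t) : ℕ) = 0 := by simp [scc, hcase, Nat.mod_self]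
        have hgg : g (scc t) = (x b).1 := by
          rw [hgs, hs, Nat.add_zero, hxab]
        rw [hgg, show b = (a + (t:ℕ)) + 1 by omega]
        exact hxs (a + (t:ℕ))
      · have hs : ((scc t) : ℕ) = (t:ℕ) + 1 := by
          simp [scc, Nat.mod_eq_of_lt (by omega : (t:ℕ)+1 < k)]
        have hgg : g (scc t) = (x ((a + (t:ℕ)) + 1)).1 := by
          rw [hgs, hs]
          congr 1
          try omega
        rw [hgg]
        exact hxs (a + (t:ℕ))
    have hμnonneg : ∀ j l, 0 ≤ walkMat g j l := by
      intro j l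
      refine Finset.sum_nonneg fun m _ => ?_
      split_ifs <;> norm_num
    have hμpos : ∀ t : Fin k, (1:ℝ) ≤ walkMat g (g t) (g (scc t)) := by
      intro t
      have h1 : (if g t = g t ∧ g (scc t) = g (scc t) then (1:ℝ) else 0) = 1 := by simp
      calc (1:ℝ) = (if g t = g t ∧ g (scc t) = g (scc t) then (1:ℝ) else 0) := h1.symm
        _ ≤ walkMat g (g t) (g (scc t)) := by
            refine Finset.single_le_sum
              (f := fun m => if g m = g t ∧ g (scc m) = g (scc t) then (1:ℝ) else 0)
              (fun m _ => ?_) (Finset.mem_univ t)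
            split_ifs <;> norm_num
    obtain ⟨t₀, -, ht₀⟩ := Finset.exists_min_image Finset.univ
      (fun t : Fin k => B (g t) (g (scc t)) / walkMat g (g t) (g (scc t)))
      ⟨⟨0, hk0⟩, Finset.mem_univ _⟩
    set ε : ℝ := B (g t₀) (g (scc t₀)) / walkMat g (g t₀) (g (scc t₀)) with hε
    have hε0 : 0 ≤ ε := div_nonneg (hedge t₀).le (hμnonneg _ _)
    set B' : Matrix (Fin q) (Fin q) ℝ := B - ε • walkMat g with hB'
    have hkey : ∀ j l, 0 ≤ B' j l ∧ (B j l = 0 → B' j l = 0) := by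
      intro j l
      by_cases hμ0 : walkMat g j l = 0
      · constructor
        · have : B' j l = B j l := by
            simp [hB', Matrix.sub_apply, Matrix.smul_apply, hμ0]
          rw [this]; exact hB j l
        · intro h0
          simp [hB', Matrix.sub_apply, Matrix.smul_apply, hμ0, h0]
      · have hm : ∃ m : Fin k, g m = j ∧ g (scc m) = l := by
          by_contra hno
          push_neg at hno
          apply hμ0
          unfold walkMat
          refine Finset.sum_eq_zero fun m _ => ?_
          rw [if_neg]
          rintro ⟨h1, h2⟩
          exact (hno m h1) h2
        obtain ⟨m, hm1, hm2⟩ := hm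
        have hBpos : 0 < B j l := by rw [← hm1, ← hm2]; exact hedge m
        have hεle : ε ≤ B j l / walkMat g j l := by
          have h5 := ht₀ m (Finset.mem_univ m)
          rw [hm1, hm2] at h5
          exact h5
        have hμpos' : 0 < walkMat g j l := lt_of_le_of_ne (hμnonneg j l) (Ne.symm hμ0)
        constructor
        · have h6 : ε * walkMat g j l ≤ B j l := (le_div_iff₀ hμpos').mp hεle
          have : B' j l = B j l - ε * walkMat g j l := by
            simp [hB', Matrix.sub_apply, Matrix.smul_apply]
          rw [this]; linarith
        · intro h0; exact absurd h0 (ne_of_gt hBpos)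
    have hdrop : B' (g t₀) (g (scc t₀)) = 0 := by
      have hμne : walkMat g (g t₀) (g (scc t₀)) ≠ 0 := by
        have := hμpos t₀; linarith
      have : B' (g t₀) (g (scc t₀))
          = B (g t₀) (g (scc t₀)) - ε * walkMat g (g t₀) (g (scc t₀)) := by
        simp [hB', Matrix.sub_apply, Matrix.smul_apply]
      rw [this, hε, div_mul_cancel₀ _ hμne, sub_self]
    have hcard' : (Finset.univ.filter (fun e : Fin q × Fin q => B' e.1 e.2 ≠ 0)).card ≤ N := by
      have hmem : ((g t₀, g (scc t₀)) : Fin q × Fin q) ∈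
          Finset.univ.filter (fun e : Fin q × Fin q => B e.1 e.2 ≠ 0) := by
        simp [ne_of_gt (hedge t₀)]
      have hss : (Finset.univ.filter (fun e : Fin q × Fin q => B' e.1 e.2 ≠ 0)) ⊆
          (Finset.univ.filter (fun e : Fin q × Fin q => B e.1 e.2 ≠ 0)).erase (g t₀, g (scc t₀)) := by
        intro e he
        simp only [Finset.mem_filter, Finset.mem_erase, Finset.mem_univ, true_and] at he ⊢
        constructor
        · rintro rfl; exact he hdrop
        · intro hBe0
          exact he ((hkey e.1 e.2).2 hBe0)
      have h7 := Finset.card_le_card hss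
      rw [Finset.card_erase_of_mem hmem] at h7
      omega
    have hB'LSS : LineSumSymm B' := by
      intro j
      have e1 : ∀ l, B' j l = B j l - ε * walkMat g j l := by
        intro l; simp [hB', Matrix.sub_apply, Matrix.smul_apply]
      have e2 : ∀ l, B' l j = B l j - ε * walkMat g l j := by
        intro l; simp [hB', Matrix.sub_apply, Matrix.smul_apply]
      simp_rw [e1, e2]
      rw [Finset.sum_sub_distrib, Finset.sum_sub_distrib, hLSS j,
        ← Finset.mul_sum, ← Finset.mul_sum, walk_row, walk_col]
    have hrec := ih B' hcard' (fun j l => (hkey j l).1) hB'LSS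
    have hBdecomp : B = ε • walkMat g + B' := by
      ext j l
      simp [hB', Matrix.sub_apply, Matrix.smul_apply, Matrix.add_apply]
    rw [hBdecomp, gadget_add, gadget_smul]
    exact sepCR_add (sepCR_smul ε hε0 (sepCR_gadget_walk hk0 g)) hrec

lemma sepCR_gadget {q : ℕ} (B : Matrix (Fin q) (Fin q) ℝ)
    (hB : ∀ j l, 0 ≤ B j l) (hLSS : LineSumSymm B) : SepCR (gadget B) :=
  sepCR_gadget_aux _ B le_rfl hB hLSS
def embedMat {p q : ℕ} {α : Type*} [Zero α] (i : Fin p)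
    (M : Matrix (Fin 2 × Fin q) (Fin 2 × Fin q) α) :
    Matrix (Fin p × Fin q) (Fin p × Fin q) α :=
  fun x y =>
    if x.1 = i then
      (if y.1 = i then M (0, x.2) (0, y.2)
       else if (y.1:ℕ) = (i:ℕ)+1 then M (0, x.2) (1, y.2) else 0)
    else if (x.1:ℕ) = (i:ℕ)+1 then
      (if y.1 = i then M (1, x.2) (0, y.2)
       else if (y.1:ℕ) = (i:ℕ)+1 then M (1, x.2) (1, y.2) else 0)
    else 0

def embVec {p : ℕ} (i : Fin p) (v : Fin 2 → ℂ) : Fin p → ℂ :=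
  fun x => if x = i then v 0 else if (x:ℕ) = (i:ℕ)+1 then v 1 else 0

lemma sepC_embed {p q : ℕ} (i : Fin p) {M : Matrix (Fin 2 × Fin q) (Fin 2 × Fin q) ℂ}
    (hM : SepC M) : SepC (embedMat i M) := by
  obtain ⟨m, v, w, rfl⟩ := hM
  refine ⟨m, fun t => embVec i (v t), w, ?_⟩
  have hlin : ∀ x y, embedMat i (∑ t, outerC (v t) ⊗ₖ outerC (w t)) x y
      = ∑ t, embedMat i (outerC (v t) ⊗ₖ outerC (w t)) x y := by
    intro x y
    simp only [embedMat, Matrix.sum_apply]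
    split_ifs <;> simp
  ext x y
  rw [Matrix.sum_apply, hlin]
  refine Finset.sum_congr rfl fun t _ => ?_
  have hne : i ≠ i → False := fun h => h rfl
  by_cases hx1 : x.1 = i <;> by_cases hy1 : y.1 = i <;>
    by_cases hx2 : (x.1:ℕ) = (i:ℕ)+1 <;> by_cases hy2 : (y.1:ℕ) = (i:ℕ)+1 <;>
    simp [embedMat, embVec, outerC, Matrix.kroneckerMap_apply, hx1, hy1, hx2, hy2] <;>
    first
      | ring
      | (exfalso; omega)
lemma sepCR_embed {p q : ℕ} (i : Fin p) {M : Matrix (Fin 2 × Fin q) (Fin 2 × Fin q) ℝ}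
    (hM : SepCR M) : SepCR (embedMat i M) := by
  have hmap : (embedMat i M).map (fun x => (x:ℂ)) = embedMat i (M.map (fun x => (x:ℂ))) := by
    ext x y
    simp only [Matrix.map_apply, embedMat]
    split_ifs <;> simp
  rw [SepCR, hmap]
  exact sepC_embed i hM

def Lmat {p q : ℕ} (x y : Fin p × Fin q) : Matrix (Fin p × Fin q) (Fin p × Fin q) ℝ :=
  fun u v => ((if u = x then (1:ℝ) else 0) - (if u = y then 1 else 0))
    * ((if v = x then (1:ℝ) else 0) - (if v = y then 1 else 0))

def Pmat {p q : ℕ} (x : Fin p × Fin q) : Matrix (Fin p × Fin q) (Fin p × Fin q) ℝ :=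
  fun u v => (if u = x then (1:ℝ) else 0) * (if v = x then 1 else 0)

lemma sepCR_Pmat {p q : ℕ} (x : Fin p × Fin q) : SepCR (Pmat x) := by
  have h := sepCR_outer (p := p) (q := q)
    (fun a => if a = x.1 then 1 else 0) (fun b => if b = x.2 then 1 else 0)
  have he : Pmat x = Matrix.of (fun u v : Fin p × Fin q =>
      (((if u.1 = x.1 then (1:ℝ) else 0)) * ((if u.2 = x.2 then (1:ℝ) else 0)))
      * (((if v.1 = x.1 then (1:ℝ) else 0)) * ((if v.2 = x.2 then (1:ℝ) else 0)))) := by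
    ext u v
    simp only [Pmat, Matrix.of_apply, Prod.ext_iff]
    by_cases h1 : u.1 = x.1 <;> by_cases h2 : u.2 = x.2 <;> by_cases h3 : v.1 = x.1 <;>
      by_cases h4 : v.2 = x.2 <;> simp [h1, h2, h3, h4]
  rw [he]
  exact h

lemma sepCR_Lmat_same {p q : ℕ} (x y : Fin p × Fin q) (hxy : x.1 = y.1) : SepCR (Lmat x y) := by
  have h := sepCR_outer (p := p) (q := q)
    (fun a => if a = x.1 then 1 else 0)
    (fun b => (if b = x.2 then 1 else 0) - (if b = y.2 then 1 else 0))
  have he : Lmat x y = Matrix.of (fun u v : Fin p × Fin q =>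
      (((if u.1 = x.1 then (1:ℝ) else 0)) * ((if u.2 = x.2 then (1:ℝ) else 0) - (if u.2 = y.2 then 1 else 0)))
      * (((if v.1 = x.1 then (1:ℝ) else 0)) * ((if v.2 = x.2 then (1:ℝ) else 0) - (if v.2 = y.2 then 1 else 0)))) := by
    ext u v
    have hfac : ∀ z : Fin p × Fin q,
        ((if z = x then (1:ℝ) else 0) - (if z = y then 1 else 0))
        = (if z.1 = x.1 then (1:ℝ) else 0) * ((if z.2 = x.2 then (1:ℝ) else 0) - (if z.2 = y.2 then 1 else 0)) := by
      intro z
      by_cases h1 : z.1 = x.1 <;> by_cases h2 : z.2 = x.2 <;> by_cases h3 : z.2 = y.2 <;>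
        simp [Prod.ext_iff, h1, h2, h3, hxy ▸ h1] <;>
        simp [← hxy, h1]
    simp only [Lmat, Matrix.of_apply, hfac]
  rw [he]
  exact h

lemma embed_gadget_eq {p q : ℕ} (i : Fin p) (h : (i:ℕ)+1 < p) (B : Matrix (Fin q) (Fin q) ℝ) :
    embedMat i (gadget B)
      = ∑ j : Fin q, ∑ l : Fin q, B j l • Lmat (i,j) ((⟨(i:ℕ)+1, h⟩ : Fin p), l) := by
  ext ⟨u1, u2⟩ ⟨v1, v2⟩
  simp only [Matrix.sum_apply, Matrix.smul_apply, smul_eq_mul, Lmat]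
  have hne : (⟨(i:ℕ)+1, h⟩ : Fin p) ≠ i := by simp [Fin.ext_iff]
  have hval : ∀ z : Fin p, ((z:ℕ) = (i:ℕ)+1) ↔ z = (⟨(i:ℕ)+1, h⟩ : Fin p) := by
    intro z; simp [Fin.ext_iff]
  have hne' : i ≠ (⟨(i:ℕ)+1, h⟩ : Fin p) := hne.symm
  by_cases hu : u1 = i <;> by_cases hu' : u1 = (⟨(i:ℕ)+1, h⟩ : Fin p) <;>
    by_cases hv : v1 = i <;> by_cases hv' : v1 = (⟨(i:ℕ)+1, h⟩ : Fin p) <;>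
    simp [embedMat, gadget, twoBlock, Matrix.diagonal_apply, Matrix.neg_apply,
      Matrix.transpose_apply, hu, hu', hv, hv', hne, hval, Prod.ext_iff,
      sub_mul, mul_sub, Finset.sum_sub_distrib, mul_ite, ite_mul, mul_zero, zero_mul,
      mul_one, one_mul, Finset.sum_ite_eq, Finset.sum_ite_eq', hne'] <;>
    (try (split_ifs <;> simp_all))
def Rfun {p q : ℕ} (A : Matrix (Fin p × Fin q) (Fin p × Fin q) ℝ) (n : ℕ) (j : Fin q) : ℝ :=
  if h : n+1 < p then ∑ l, A (⟨n, by omega⟩, j) (⟨n+1, h⟩, l) else 0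

def Cfun {p q : ℕ} (A : Matrix (Fin p × Fin q) (Fin p × Fin q) ℝ) (n : ℕ) (j : Fin q) : ℝ :=
  if h : n+1 < p then ∑ l, A (⟨n, by omega⟩, l) (⟨n+1, h⟩, j) else 0

lemma block_lss {p q : ℕ} (A : Matrix (Fin p × Fin q) (Fin p × Fin q) ℝ)
    (hsym : ∀ x y, A x y = A y x)
    (htri : ∀ x y : Fin p × Fin q, A x y ≠ 0 → |(x.1 : ℤ) - (y.1 : ℤ)| ≤ 1)
    (hpt : ∀ x, (∑ y, ptrans A x y) = ∑ y, A x y) :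
    ∀ (n : ℕ), ∀ j, Rfun A n j = Cfun A n j := by
  have core : ∀ (n : ℕ) (hn : n < p) (j : Fin q),
      (∑ k : Fin p, ((∑ l, A (⟨n,hn⟩, l) (k, j)) - (∑ l, A (⟨n,hn⟩, j) (k, l)))) = 0 := by
    intro n hn j
    rw [Finset.sum_sub_distrib, sub_eq_zero]
    calc ∑ k : Fin p, ∑ l, A (⟨n,hn⟩, l) (k, j)
        = ∑ y : Fin p × Fin q, ptrans A (⟨n,hn⟩, j) y := by
          rw [Fintype.sum_prod_type]; rfl
      _ = ∑ y, A (⟨n,hn⟩, j) y := hpt _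
      _ = ∑ k : Fin p, ∑ l, A (⟨n,hn⟩, j) (k, l) := by rw [Fintype.sum_prod_type]
  have hfar : ∀ (n:ℕ) (hn : n < p) (j : Fin q) (k : Fin p), ((k:ℕ) ≠ n+1) → ((k:ℕ)+1 ≠ n) → ((k:ℕ) ≠ n) →
      ((∑ l, A (⟨n,hn⟩, l) (k, j)) - (∑ l, A (⟨n,hn⟩, j) (k, l))) = 0 := by
    intro n hn j k h1 h2 h3
    have hz1 : ∀ l, A (⟨n,hn⟩, l) (k, j) = 0 := by
      intro l
      by_contra hz
      have := htri _ _ hz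
      rw [abs_le] at this
      simp only at this
      omega
    have hz2 : ∀ l, A (⟨n,hn⟩, j) (k, l) = 0 := by
      intro l
      by_contra hz
      have := htri _ _ hz
      rw [abs_le] at this
      simp only at this
      omega
    simp [hz1, hz2]
  have hmid : ∀ (n:ℕ) (hn : n < p) (j : Fin q),
      ((∑ l, A (⟨n,hn⟩, l) (⟨n,hn⟩, j)) - (∑ l, A (⟨n,hn⟩, j) (⟨n,hn⟩, l))) = 0 := by
    intro n hn j
    rw [sub_eq_zero]
    exact Finset.sum_congr rfl fun l _ => hsym _ _
  intro n
  induction n with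
  | zero =>
    intro j
    by_cases h : 1 < p
    · have hc := core 0 (by omega) j
      rw [Finset.sum_eq_single (⟨1, h⟩ : Fin p)] at hc
      · simp only [Rfun, Cfun, dif_pos h]
        have e1 : (∑ l, A (⟨0, by omega⟩, l) ((⟨1, h⟩ : Fin p), j)) = Cfun A 0 j := by
          rw [Cfun, dif_pos h]
        have e2 : (∑ l, A (⟨0, by omega⟩, j) ((⟨1, h⟩ : Fin p), l)) = Rfun A 0 j := by
          rw [Rfun, dif_pos h]
        rw [e1, e2, Rfun, Cfun, dif_pos h, dif_pos h] at hc
        linarith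
      · intro b _ hb
        by_cases hb0 : (b:ℕ) = 0
        · have hbb : b = ⟨0, by omega⟩ := Fin.ext hb0
          rw [hbb]
          exact hmid 0 (by omega) j
        · refine hfar 0 (by omega) j b ?_ (by omega) hb0
          intro hc2
          exact hb (Fin.ext hc2)
      · intro hmem; exact absurd (Finset.mem_univ _) hmem
    · rw [Rfun, Cfun, dif_neg h, dif_neg h]
  | succ m ih =>
    intro j
    by_cases h : (m+1)+1 < p
    · have hc := core (m+1) (by omega) j
      have hzz : ∀ k ∈ Finset.univ, k ∉ ({⟨m, by omega⟩, ⟨m+2, h⟩} : Finset (Fin p)) →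
          ((∑ l, A (⟨m+1, by omega⟩, l) (k, j)) - (∑ l, A (⟨m+1, by omega⟩, j) (k, l))) = 0 := by
        intro k _ hk
        simp only [Finset.mem_insert, Finset.mem_singleton, not_or] at hk
        by_cases hkm : (k:ℕ) = m+1
        · have hbb : k = ⟨m+1, by omega⟩ := Fin.ext hkm
          rw [hbb]
          exact hmid (m+1) (by omega) j
        · refine hfar (m+1) (by omega) j k ?_ ?_ hkm
          · intro hc2; exact hk.2 (Fin.ext (show (k:ℕ) = m+2 by omega))
          · intro hc2; exact hk.1 (Fin.ext (show (k:ℕ) = m by omega))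
      have hsub := Finset.sum_subset
        (Finset.subset_univ ({⟨m, by omega⟩, ⟨m+2, h⟩} : Finset (Fin p))) hzz
      rw [← hsub] at hc
      rw [Finset.sum_pair (by simp [Fin.ext_iff] : (⟨m, by omega⟩ : Fin p) ≠ ⟨m+2, h⟩)] at hc
      -- identify terms
      have hm1 : m + 1 < p := by omega
      have e1 : (∑ l, A (⟨m+1, by omega⟩, l) ((⟨m, by omega⟩ : Fin p), j)) = Rfun A m j := by
        rw [Rfun, dif_pos hm1]
        exact Finset.sum_congr rfl fun l _ => hsym _ _
      have e2 : (∑ l, A (⟨m+1, by omega⟩, j) ((⟨m, by omega⟩ : Fin p), l)) = Cfun A m j := by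
        rw [Cfun, dif_pos hm1]
        exact Finset.sum_congr rfl fun l _ => hsym _ _
      have e3 : (∑ l, A (⟨m+1, by omega⟩, l) ((⟨m+2, h⟩ : Fin p), j)) = Cfun A (m+1) j := by
        rw [Cfun, dif_pos h]
      have e4 : (∑ l, A (⟨m+1, by omega⟩, j) ((⟨m+2, h⟩ : Fin p), l)) = Rfun A (m+1) j := by
        rw [Rfun, dif_pos h]
      rw [e1, e2, e3, e4] at hc
      have := ih j
      linarith
    · rw [Rfun, Cfun, dif_neg h, dif_neg h]

lemma Lmat_symm {p q : ℕ} (x y : Fin p × Fin q) : Lmat x y = Lmat y x := by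
  ext u v
  simp only [Lmat]
  ring

lemma decomp_entry {p q : ℕ} (c : (Fin p × Fin q) → (Fin p × Fin q) → ℝ)
    (r : (Fin p × Fin q) → ℝ) (u v : Fin p × Fin q) :
    ((∑ x, r x • Pmat x) + ∑ x, ∑ y, c x y • Lmat x y) u v
      = ((if u = v then r u else 0))
        + ((if u = v then ∑ y, c u y else 0) - c u v - c v u + (if u = v then ∑ x, c x u else 0)) := by
  simp only [Matrix.add_apply, Matrix.sum_apply, Matrix.smul_apply, smul_eq_mul, Pmat, Lmat]
  congr 1
  · rw [Finset.sum_eq_single u]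
    · by_cases h : u = v
      · subst h; simp
      · rw [if_neg h]; simp [Ne.symm h]
    · intro b _ hb; simp [Ne.symm hb]
    · simp
  · have hexp : ∀ x y : Fin p × Fin q,
        c x y * (((if u = x then (1:ℝ) else 0) - if u = y then 1 else 0)
          * ((if v = x then (1:ℝ) else 0) - if v = y then 1 else 0))
        = (c x y * ((if u = x then (1:ℝ) else 0) * (if v = x then 1 else 0))
          - c x y * ((if u = x then (1:ℝ) else 0) * (if v = y then 1 else 0)))
          - (c x y * ((if u = y then (1:ℝ) else 0) * (if v = x then 1 else 0))
          - c x y * ((if u = y then (1:ℝ) else 0) * (if v = y then 1 else 0))) := by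
      intro x y; ring
    simp_rw [hexp, Finset.sum_sub_distrib]
    simp only [mul_ite, ite_mul, mul_zero, zero_mul, mul_one, one_mul,
      Finset.sum_ite_eq, Finset.sum_ite_eq', Finset.mem_univ, if_true,
      Finset.sum_const_zero]
    by_cases h : u = v
    · subst h; simp
      try ring
    · simp [h, Ne.symm h]
      try ring
lemma global_decomp {p q : ℕ} (A : Matrix (Fin p × Fin q) (Fin p × Fin q) ℝ)
    (hsym : ∀ x y, A x y = A y x) :
    A = (∑ x : Fin p × Fin q, (∑ y, A x y) • Pmat x)
      + ∑ x : Fin p × Fin q, ∑ y : Fin p × Fin q,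
          (if x = y then (0:ℝ) else -(A x y)/2) • Lmat x y := by
  ext u v
  rw [decomp_entry]
  by_cases h : u = v
  · subst h
    have h1 : (∑ y, (if u = y then (0:ℝ) else -(A u y)/2)) = (A u u - ∑ y, A u y)/2 := by
      have e : ∀ y, (if u = y then (0:ℝ) else -(A u y)/2)
          = -(A u y)/2 + (if u = y then (A u y)/2 else 0) := by
        intro y; split_ifs <;> ring
      simp_rw [e]
      rw [Finset.sum_add_distrib, Finset.sum_ite_eq]
      simp only [Finset.mem_univ, if_true]
      have e2 : (∑ y, -(A u y)/2) = -(∑ y, A u y)/2 := by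
        rw [← Finset.sum_div, ← Finset.sum_neg_distrib]
      rw [e2]; ring
    have h2 : (∑ x, (if x = u then (0:ℝ) else -(A x u)/2)) = (A u u - ∑ y, A u y)/2 := by
      have e : ∀ x, (if x = u then (0:ℝ) else -(A x u)/2)
          = -(A u x)/2 + (if x = u then (A u x)/2 else 0) := by
        intro x
        rw [hsym x u]
        split_ifs <;> ring
      simp_rw [e]
      rw [Finset.sum_add_distrib, Finset.sum_ite_eq']
      simp only [Finset.mem_univ, if_true]
      have e2 : (∑ x, -(A u x)/2) = -(∑ x, A u x)/2 := by
        rw [← Finset.sum_div, ← Finset.sum_neg_distrib]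
      rw [e2]; ring
    rw [h1, h2]
    simp
    try linarith
  · rw [if_neg h, if_neg h, if_neg h, if_neg h, if_neg (fun hh => h hh.symm), hsym v u]
    ring

theorem stmt11' {p q : ℕ} (A : Matrix (Fin p × Fin q) (Fin p × Fin q) ℝ)
    (hsymm : A.IsSymm)
    (hrow : ∀ x, 0 ≤ ∑ y, A x y)
    (hoff : ∀ x y, x ≠ y → A x y ≤ 0)
    (htr : A.trace = 1)
    (htri : ∀ x y : Fin p × Fin q, A x y ≠ 0 → |(x.1 : ℤ) - (y.1 : ℤ)| ≤ 1)
    (hpt : ∀ x, (∑ y, ptrans A x y) = ∑ y, A x y) :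
    SeparableState (A.map (fun x => (x : ℂ))) := by
  classical
  have hsym : ∀ x y, A x y = A y x := fun x y =>
    ((congrFun (congrFun hsymm x) y : Aᵀ x y = A x y)).symm
  set c : (Fin p × Fin q) → (Fin p × Fin q) → ℝ :=
    fun x y => if x = y then (0:ℝ) else -(A x y)/2 with hcdef
  have hdec := global_decomp A hsym
  have hcsym : ∀ x y, c x y = c y x := by
    intro x y
    by_cases hxy : x = y
    · subst hxy; rfl
    · simp only [hcdef]; rw [if_neg hxy, if_neg (fun hh => hxy hh.symm), hsym]
  have hsplit : ∀ x y : Fin p × Fin q, c x y • Lmat x y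
      = (if x.1 = y.1 then c x y else 0) • Lmat x y
        + ((if (x.1:ℕ)+1 = (y.1:ℕ) then c x y else 0) • Lmat x y
        + (if (y.1:ℕ)+1 = (x.1:ℕ) then c x y else 0) • Lmat x y) := by
    intro x y
    by_cases h1 : x.1 = y.1
    · have h2 : ¬((x.1:ℕ)+1 = (y.1:ℕ)) := by rw [h1]; omega
      have h3 : ¬((y.1:ℕ)+1 = (x.1:ℕ)) := by rw [h1]; omega
      rw [if_pos h1, if_neg h2, if_neg h3]; simp
    · by_cases h2 : (x.1:ℕ)+1 = (y.1:ℕ)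
      · have h3 : ¬((y.1:ℕ)+1 = (x.1:ℕ)) := by omega
        rw [if_neg h1, if_pos h2, if_neg h3]; simp
      · by_cases h3 : (y.1:ℕ)+1 = (x.1:ℕ)
        · rw [if_neg h1, if_neg h2, if_pos h3]; simp
        · have hxy : x ≠ y := fun hh => h1 (by rw [hh])
          have hne' : (x.1:ℕ) ≠ (y.1:ℕ) := fun hh => h1 (Fin.ext hh)
          have hA0 : A x y = 0 := by
            by_contra hz
            have habs := htri x y hz
            rw [abs_le] at habs
            omega
          have hc0 : c x y = 0 := by simp [hcdef, hxy, hA0]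
          rw [hc0]
          simp
  have hd2 : (∑ x : Fin p × Fin q, ∑ y : Fin p × Fin q, c x y • Lmat x y)
      = (∑ x : Fin p × Fin q, ∑ y : Fin p × Fin q, (if x.1 = y.1 then c x y else 0) • Lmat x y)
        + ((∑ x : Fin p × Fin q, ∑ y : Fin p × Fin q, (if (x.1:ℕ)+1 = (y.1:ℕ) then c x y else 0) • Lmat x y)
        + (∑ x : Fin p × Fin q, ∑ y : Fin p × Fin q, (if (y.1:ℕ)+1 = (x.1:ℕ) then c x y else 0) • Lmat x y)) := by
    simp_rw [hsplit, Finset.sum_add_distrib]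
  have hswap : (∑ x : Fin p × Fin q, ∑ y : Fin p × Fin q, (if (y.1:ℕ)+1 = (x.1:ℕ) then c x y else 0) • Lmat x y)
      = ∑ x : Fin p × Fin q, ∑ y : Fin p × Fin q, (if (x.1:ℕ)+1 = (y.1:ℕ) then c x y else 0) • Lmat x y := by
    have hterm : ∀ x y : Fin p × Fin q, (if ((y.1:ℕ)+1 = (x.1:ℕ)) then c x y else 0) • Lmat x y
        = (if ((y.1:ℕ)+1 = (x.1:ℕ)) then c y x else 0) • Lmat y x := by
      intro x y; rw [hcsym, Lmat_symm]
    calc (∑ x : Fin p × Fin q, ∑ y : Fin p × Fin q, (if ((y.1:ℕ)+1 = (x.1:ℕ)) then c x y else 0) • Lmat x y)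
        = ∑ x : Fin p × Fin q, ∑ y : Fin p × Fin q, (if ((y.1:ℕ)+1 = (x.1:ℕ)) then c y x else 0) • Lmat y x :=
          Finset.sum_congr rfl fun x _ => Finset.sum_congr rfl fun y _ => hterm x y
      _ = _ := Finset.sum_comm
  have hgad : ∀ (i : Fin p) (h : (i:ℕ)+1 < p), SepCR
      (embedMat i (gadget (fun j l => c (i,j) ((⟨(i:ℕ)+1, h⟩ : Fin p), l)))) := by
    intro i h
    have hnepair : ∀ (j l : Fin q), ((i,j) : Fin p × Fin q) ≠ ((⟨(i:ℕ)+1, h⟩ : Fin p), l) := by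
      intro j l hh
      have h2 := congrArg Prod.fst hh
      have h3 := congrArg Fin.val h2
      simp only at h3
      omega
    have hcv : ∀ (j l : Fin q), c (i,j) ((⟨(i:ℕ)+1, h⟩ : Fin p), l)
        = -(A (i,j) ((⟨(i:ℕ)+1, h⟩ : Fin p), l))/2 := by
      intro j l
      simp only [hcdef]
      rw [if_neg (hnepair j l)]
    apply sepCR_embed
    apply sepCR_gadget
    · intro j l
      rw [hcv]
      have := hoff _ _ (hnepair j l)
      linarith
    · intro j
      have hb := block_lss A hsym htri hpt (i:ℕ) j
      rw [Rfun, Cfun, dif_pos h, dif_pos h] at hb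
      have hb' : (∑ l, A (i, j) ((⟨(i:ℕ)+1, h⟩ : Fin p), l))
          = ∑ l, A (i, l) ((⟨(i:ℕ)+1, h⟩ : Fin p), j) := hb
      have t1 : ∀ (f : Fin q → ℝ), (∑ l, -(f l)/2) = -(∑ l, f l)/2 := by
        intro f; rw [← Finset.sum_div, ← Finset.sum_neg_distrib]
      simp_rw [hcv]
      rw [t1 (fun l => A (i,j) ((⟨(i:ℕ)+1, h⟩ : Fin p), l)),
        t1 (fun l => A (i,l) ((⟨(i:ℕ)+1, h⟩ : Fin p), j)), hb']
  have hregroup : (∑ x : Fin p × Fin q, ∑ y : Fin p × Fin q,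
        (if (x.1:ℕ)+1 = (y.1:ℕ) then c x y else 0) • Lmat x y)
      = ∑ i : Fin p, (if h : (i:ℕ)+1 < p then
          embedMat i (gadget (fun j l => c (i,j) ((⟨(i:ℕ)+1, h⟩ : Fin p), l))) else 0) := by
    rw [Fintype.sum_prod_type]
    refine Finset.sum_congr rfl fun i _ => ?_
    by_cases h : (i:ℕ)+1 < p
    · rw [dif_pos h]; refine Eq.trans ?_ (embed_gadget_eq i h _).symm
      refine Finset.sum_congr rfl fun j _ => ?_
      rw [Fintype.sum_prod_type]
      rw [Finset.sum_eq_single (⟨(i:ℕ)+1, h⟩ : Fin p)]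
      · exact Finset.sum_congr rfl fun l _ => by rw [if_pos rfl]
      · intro k _ hk
        apply Finset.sum_eq_zero
        intro l _
        rw [if_neg, zero_smul]
        exact fun hc2 => hk (Fin.ext hc2.symm)
      · intro hh; exact absurd (Finset.mem_univ _) hh
    · rw [dif_neg h]
      apply Finset.sum_eq_zero; intro j _
      apply Finset.sum_eq_zero; intro y _
      rw [if_neg, zero_smul]
      intro hc2
      exact h (by rw [hc2]; exact y.1.2)
  have hsepcr : SepCR A := by
    rw [hdec, hd2, hswap, hregroup]
    apply sepCR_add
    · apply sepCR_sum; intro x _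
      exact sepCR_smul _ (hrow x) (sepCR_Pmat x)
    apply sepCR_add
    · apply sepCR_sum; intro x _
      apply sepCR_sum; intro y _
      by_cases h1 : x.1 = y.1
      · rw [if_pos h1]
        by_cases h2 : x = y
        · have hc0 : c x y = 0 := by rw [h2]; simp [hcdef]
          rw [hc0, zero_smul]; exact sepCR_zero
        · have hcv : c x y = -(A x y)/2 := by simp only [hcdef]; rw [if_neg h2]
          rw [hcv]
          exact sepCR_smul _ (by have := hoff x y h2; linarith) (sepCR_Lmat_same x y h1)
      · rw [if_neg h1, zero_smul]; exact sepCR_zero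
    have hG : SepCR (∑ i : Fin p, (if h : (i:ℕ)+1 < p then
        embedMat i (gadget (fun j l => c (i,j) ((⟨(i:ℕ)+1, h⟩ : Fin p), l))) else 0)) := by
      apply sepCR_sum; intro i _
      by_cases h : (i:ℕ)+1 < p
      · rw [dif_pos h]; exact hgad i h
      · rw [dif_neg h]; exact sepCR_zero
    exact sepCR_add hG hG
  have hp : 0 < p := by
    by_contra hp0
    have hp1 : p = 0 := by omega
    subst hp1
    rw [Matrix.trace] at htr
    simp at htr
  have hq : 0 < q := by
    by_contra hq0
    have hq1 : q = 0 := by omega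
    subst hq1
    rw [Matrix.trace] at htr
    simp at htr
  have htrace : (A.map (fun x => (x:ℂ))).trace = 1 := by
    have e : (A.map (fun x => (x:ℂ))).trace = ((A.trace : ℝ) : ℂ) := by
      simp [Matrix.trace, Matrix.diag, Matrix.map_apply, Complex.ofReal_sum]
    rw [e, htr]
    norm_num
  exact sep_of_sepC hp hq hsepcr htrace

end Stmt11

/-- for block tridiagonal `A ∈ S_1`, if the partial transpose has the
same row sums as A, then A is separable in ℂ^p ⊗ ℂ^q. -/
theorem stmt11 {p q : ℕ} (A : Matrix (Fin p × Fin q) (Fin p × Fin q) ℝ)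
    (hsymm : A.IsSymm)
    (hrow : ∀ x, 0 ≤ ∑ y, A x y)
    (hoff : ∀ x y, x ≠ y → A x y ≤ 0)
    (htr : A.trace = 1)
    (htri : ∀ x y : Fin p × Fin q, A x y ≠ 0 → |(x.1 : ℤ) - (y.1 : ℤ)| ≤ 1)
    (hpt : ∀ x, (∑ y, ptrans A x y) = ∑ y, A x y) :
    SeparableStateR A :=
  Stmt11.stmt11' A hsymm hrow hoff htr htri hpt
end
end

section
/- Let A be a real symmetric matrix indexed by (Fin p × Fin q) that is block tridiagonal (A_{(i,j),(i',j')} ≠ 0 implies |i − i'| ≤ 1). If for every index the row sum of the partial transpose A^pT equals the corresponding row sum of A, then every q×q block A^{i,k} (with entries (A^{i,k})_{j,l} = A_{(i,j),(k,l)}) is line sum symmetric. -/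
/-! Fix a row index `j` and let `S a b` be the sum of row `j` of the block `A^{a,b}`. By symmetry
of `A`, the sum of column `j` of `A^{a,b}` is `S b a`, and the row `(a, j)` of `A^pT` sums to
`∑ b, S b a`; so the hypothesis says that `S` is line sum symmetric, and `S` inherits
tridiagonality from `A`. A tridiagonal line sum symmetric matrix is symmetric, which is the claim. -/

open Matrix BigOperators Kronecker
open scoped ComplexOrder

noncomputable section

section Tridiagonal

variable {α : Type*} [AddCommGroup α] {n : ℕ} {F : Matrix (Fin n) (Fin n) α}

theorem Matrix.apply_eq_zero_of_tridiagonal (hF : ∀ a b, F a b ≠ 0 → |(a : ℤ) - b| ≤ 1)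
    {a b : Fin n} (hab : 1 < |(a : ℤ) - b|) : F a b = 0 := by
  by_contra h
  exact (hab.trans_le (hF a b h)).false

/-- Zero row sums of `F - Fᵀ` force its superdiagonal to vanish, row by row from the top. -/
theorem Matrix.apply_succ_eq_of_tridiagonal_of_sum_row_eq_sum_col
    (hF : ∀ a b, F a b ≠ 0 → |(a : ℤ) - b| ≤ 1) (hsum : ∀ a, ∑ b, F a b = ∑ b, F b a) :
    ∀ a b : Fin n, (a : ℕ) + 1 = b → F a b = F b a := by
  intro a
  induction a using WellFoundedLT.induction with
  | ind a ih =>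
    intro b hab
    have hrow : ∑ c, (F a c - F c a) = 0 := by
      rw [Finset.sum_sub_distrib, hsum a, sub_self]
    rw [Finset.sum_eq_single b ?_ (by simp)] at hrow
    · exact sub_eq_zero.mp hrow
    intro c _ hcb
    rcases eq_or_ne c a with rfl | hca
    · exact sub_self _
    by_cases hprev : (c : ℕ) + 1 = a
    · rw [ih c (Fin.lt_def.mpr (by omega)) a hprev, sub_self]
    have hcb' : (c : ℕ) ≠ b := Fin.val_ne_of_ne hcb
    have hca' : (c : ℕ) ≠ a := Fin.val_ne_of_ne hca
    rw [apply_eq_zero_of_tridiagonal hF (by rw [lt_abs]; omega),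
      apply_eq_zero_of_tridiagonal hF (by rw [lt_abs]; omega), sub_self]

theorem Matrix.isSymm_of_tridiagonal_of_sum_row_eq_sum_col
    (hF : ∀ a b, F a b ≠ 0 → |(a : ℤ) - b| ≤ 1) (hsum : ∀ a, ∑ b, F a b = ∑ b, F b a) :
    F.IsSymm := by
  have hsucc := apply_succ_eq_of_tridiagonal_of_sum_row_eq_sum_col hF hsum
  ext a b
  rw [transpose_apply]
  by_cases hfar : 1 < |(a : ℤ) - b|
  · rw [apply_eq_zero_of_tridiagonal hF hfar,
      apply_eq_zero_of_tridiagonal hF (by rwa [abs_sub_comm])]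
  rw [not_lt, abs_le] at hfar
  rcases (by omega : (b : ℕ) + 1 = a ∨ (b : ℕ) = a ∨ (a : ℕ) + 1 = b) with h | h | h
  · exact hsucc b a h
  · rw [Fin.ext h]
  · exact (hsucc a b h).symm

end Tridiagonal

section BlockRowSums

variable {α : Type*} [AddCommMonoid α] {p q : ℕ} {A : Matrix (Fin p × Fin q) (Fin p × Fin q) α}

/-- Entry `(a, b)` is the sum of row `j` of the block `A^{a,b}`. -/
def blockRowSums (A : Matrix (Fin p × Fin q) (Fin p × Fin q) α) (j : Fin q) :
    Matrix (Fin p) (Fin p) α :=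
  fun a b => ∑ l, A (a, j) (b, l)

theorem blockRowSums_tridiagonal
    (htri : ∀ x y : Fin p × Fin q, A x y ≠ 0 → |(x.1 : ℤ) - (y.1 : ℤ)| ≤ 1) (j : Fin q) :
    ∀ a b, blockRowSums A j a b ≠ 0 → |(a : ℤ) - b| ≤ 1 := by
  intro a b h
  obtain ⟨l, -, hl⟩ := Finset.exists_ne_zero_of_sum_ne_zero h
  exact htri _ _ hl

theorem sum_col_blockOf_eq_blockRowSums (A : Matrix (Fin p × Fin q) (Fin p × Fin q) ℝ)
    (hsymm : A.IsSymm) (i k : Fin p) (j : Fin q) :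
    ∑ l, blockOf A i k l j = blockRowSums A j k i :=
  Finset.sum_congr rfl fun _ _ => hsymm.apply _ _

theorem sum_row_blockRowSums_eq_sum_col (hsymm : A.IsSymm)
    (hpt : ∀ x, (∑ y, ptrans A x y) = ∑ y, A x y) (j : Fin q) (a : Fin p) :
    ∑ b, blockRowSums A j a b = ∑ b, blockRowSums A j b a := by
  have h := hpt (a, j)
  simp only [Fintype.sum_prod_type, ptrans] at h
  exact h.symm.trans
    (Finset.sum_congr rfl fun _ _ => Finset.sum_congr rfl fun _ _ => hsymm.apply _ _)

end BlockRowSums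

/-- a real symmetric block tridiagonal matrix whose partial transpose
has the same row sums has all its q×q blocks line sum symmetric. -/
theorem stmt13 {p q : ℕ} (A : Matrix (Fin p × Fin q) (Fin p × Fin q) ℝ)
    (hsymm : A.IsSymm)
    (htri : ∀ x y : Fin p × Fin q, A x y ≠ 0 → |(x.1 : ℤ) - (y.1 : ℤ)| ≤ 1)
    (hpt : ∀ x, (∑ y, ptrans A x y) = ∑ y, A x y) :
    ∀ i k : Fin p, LineSumSymm (blockOf A i k) := by
  intro i k j
  have hS : (blockRowSums A j).IsSymm :=
    Matrix.isSymm_of_tridiagonal_of_sum_row_eq_sum_col (blockRowSums_tridiagonal htri j)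
      (sum_row_blockRowSums_eq_sum_col hsymm hpt j)
  rw [sum_col_blockOf_eq_blockRowSums A hsymm]
  exact hS.apply k i
end
end

section
/- Let A be a real symmetric matrix indexed by (Fin p × Fin q) with nonpositive off-diagonal entries, trace 1, and all row sums equal to zero (i.e., A ∈ S_1^0). Call an off-diagonal entry A_{(i,j),(i',j')} ≠ 0 an entangled edge if i ≠ i' and j ≠ j'. If A has at least one entangled edge and there is a fixed index v = (i₀,j₀) such that every entangled edge of A is incident to v (i.e., whenever A_{(i,j),(i',j')} ≠ 0 with i ≠ i' and j ≠ j', then (i,j) = v or (i',j') = v), then A is not separable in ℂ^p ⊗ ℂ^q. -/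
open Matrix BigOperators Kronecker
open scoped ComplexOrder

noncomputable section

/-!
By the Peres criterion, a separable state has a positive semidefinite partial transpose `Aᵀᵖ`.
Partial transposition only permutes the entries, so `1ᴴ Aᵀᵖ 1 = ∑ A = 0`; positive
semidefiniteness then forces `Aᵀᵖ 1 = 0`, i.e. every row of `Aᵀᵖ` sums to zero. In row `v`,
however, partial transposition keeps the entries `A_{v y}` with `y` sharing a coordinate with
`v` (using symmetry) and replaces the entangled ones, which are `≤ 0` and not all zero, by
entries that vanish since every entangled edge is incident to `v`. So row `v` of `Aᵀᵖ` has
positive sum.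
-/

section PartialTranspose

variable {p q : ℕ}

lemma ptrans_sum_smul {ι α : Type*} [Semiring α] (s : Finset ι) (c : ι → α)
    (M : ι → Matrix (Fin p × Fin q) (Fin p × Fin q) α) :
    ptrans (∑ i ∈ s, c i • M i) = ∑ i ∈ s, c i • ptrans (M i) := by
  ext x y
  simp [ptrans, Matrix.sum_apply]

lemma ptrans_kronecker {α : Type*} [Mul α] (ρ : Matrix (Fin p) (Fin p) α)
    (η : Matrix (Fin q) (Fin q) α) : ptrans (ρ ⊗ₖ η) = ρ ⊗ₖ ηᵀ :=
  rfl

lemma sum_sum_ptrans {α : Type*} [AddCommMonoid α]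
    (A : Matrix (Fin p × Fin q) (Fin p × Fin q) α) :
    ∑ x, ∑ y, ptrans A x y = ∑ x, ∑ y, A x y := by
  have hinv : Function.Involutive
      (fun t : (Fin p × Fin q) × (Fin p × Fin q) => ((t.1.1, t.2.2), (t.2.1, t.1.2))) :=
    fun _ => rfl
  exact (Fintype.sum_prod_type' fun x y => ptrans A x y).symm.trans
    ((Fintype.sum_equiv hinv.toPerm _ _ fun _ => rfl).trans
      (Fintype.sum_prod_type' fun x y => A x y))

theorem SeparableState.posSemidef_ptrans {A : Matrix (Fin p × Fin q) (Fin p × Fin q) ℂ}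
    (hA : SeparableState A) : (ptrans A).PosSemidef := by
  obtain ⟨m, c, ρ, η, hc, -, hρ, hη, rfl⟩ := hA
  rw [ptrans_sum_smul]
  refine posSemidef_sum _ fun i _ => ?_
  rw [ptrans_kronecker]
  exact ((hρ i).2.1.kronecker (hη i).2.1.transpose).smul (Complex.zero_le_real.mpr (hc i))

end PartialTranspose

theorem Matrix.PosSemidef.sum_row_eq_zero {𝕜 n : Type*} [RCLike 𝕜] [Fintype n]
    {M : Matrix n n 𝕜} (hM : M.PosSemidef) (h : ∑ x, ∑ y, M x y = 0) (x : n) :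
    ∑ y, M x y = 0 := by
  have hker : M *ᵥ 1 = 0 :=
    (hM.dotProduct_mulVec_zero_iff 1).mp (by simpa [dotProduct, mulVec] using h)
  simpa [mulVec, dotProduct] using congrFun hker x

section EntangledEdges

variable {p q : ℕ} {A : Matrix (Fin p × Fin q) (Fin p × Fin q) ℝ} {v : Fin p × Fin q}

lemma ptrans_apply_eq_zero
    (hv : ∀ x y : Fin p × Fin q, A x y ≠ 0 → x.1 ≠ y.1 → x.2 ≠ y.2 → x = v ∨ y = v)
    {y : Fin p × Fin q} (h1 : y.1 ≠ v.1) (h2 : y.2 ≠ v.2) : ptrans A v y = 0 := by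
  by_contra hne
  rcases hv (v.1, y.2) (y.1, v.2) hne h1.symm h2 with h | h
  · exact h2 (Prod.ext_iff.mp h).2
  · exact h1 (Prod.ext_iff.mp h).1

lemma le_ptrans_apply (hsymm : A.IsSymm) (hoff : ∀ x y, x ≠ y → A x y ≤ 0)
    (hv : ∀ x y : Fin p × Fin q, A x y ≠ 0 → x.1 ≠ y.1 → x.2 ≠ y.2 → x = v ∨ y = v)
    (y : Fin p × Fin q) : A v y ≤ ptrans A v y := by
  obtain ⟨i, j⟩ := y
  by_cases h1 : i = v.1
  · subst h1
    simp [ptrans, hsymm.apply]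
  by_cases h2 : j = v.2
  · subst h2
    simp [ptrans]
  rw [ptrans_apply_eq_zero hv h1 h2]
  exact hoff v (i, j) fun h => h1 (h ▸ rfl)

lemma sum_ptrans_row_pos (hsymm : A.IsSymm) (hoff : ∀ x y, x ≠ y → A x y ≤ 0)
    (hrow : ∑ y, A v y = 0)
    (hv : ∀ x y : Fin p × Fin q, A x y ≠ 0 → x.1 ≠ y.1 → x.2 ≠ y.2 → x = v ∨ y = v)
    {w : Fin p × Fin q} (hw : A v w ≠ 0) (hw1 : w.1 ≠ v.1) (hw2 : w.2 ≠ v.2) :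
    0 < ∑ y, ptrans A v y := by
  rw [← hrow]
  refine Finset.sum_lt_sum (fun y _ => le_ptrans_apply hsymm hoff hv y) ⟨w, Finset.mem_univ _, ?_⟩
  rw [ptrans_apply_eq_zero hv hw1 hw2]
  exact (hoff v w fun h => hw1 (h ▸ rfl)).lt_of_ne hw

end EntangledEdges

theorem stmt18_general {p q : ℕ} (A : Matrix (Fin p × Fin q) (Fin p × Fin q) ℝ)
    (hsymm : A.IsSymm)
    (hoff : ∀ x y, x ≠ y → A x y ≤ 0)
    (hrow : ∀ x, (∑ y, A x y) = 0)
    (hexists : ∃ x y : Fin p × Fin q, A x y ≠ 0 ∧ x.1 ≠ y.1 ∧ x.2 ≠ y.2)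
    (v : Fin p × Fin q)
    (hv : ∀ x y : Fin p × Fin q, A x y ≠ 0 → x.1 ≠ y.1 → x.2 ≠ y.2 → x = v ∨ y = v) :
    ¬ SeparableStateR A := by
  intro hsep
  obtain ⟨w, hw, hw1, hw2⟩ : ∃ w, A v w ≠ 0 ∧ w.1 ≠ v.1 ∧ w.2 ≠ v.2 := by
    obtain ⟨x, y, hxy, h1, h2⟩ := hexists
    rcases hv x y hxy h1 h2 with rfl | rfl
    · exact ⟨y, hxy, Ne.symm h1, Ne.symm h2⟩
    · exact ⟨x, by rwa [hsymm.apply], h1, h2⟩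
  have hpos := sum_ptrans_row_pos hsymm hoff (hrow v) hv hw hw1 hw2
  have hpsd : ((ptrans A).map ((↑) : ℝ → ℂ)).PosSemidef := hsep.posSemidef_ptrans
  have htotal : ∑ x, ∑ y, (ptrans A).map ((↑) : ℝ → ℂ) x y = 0 := by
    simp only [map_apply]
    exact_mod_cast (sum_sum_ptrans A).trans (by simp [hrow])
  have hzero : ((∑ y, ptrans A v y : ℝ) : ℂ) = 0 := by
    push_cast
    exact hpsd.sum_row_eq_zero htotal v
  exact hpos.ne' (by exact_mod_cast hzero)

/-- a matrix in `S_1^0` having at least one entangled edge, all of whose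
entangled edges are incident to a single fixed vertex v, is not separable. -/
theorem stmt18 {p q : ℕ} (A : Matrix (Fin p × Fin q) (Fin p × Fin q) ℝ)
    (hsymm : A.IsSymm)
    (hoff : ∀ x y, x ≠ y → A x y ≤ 0)
    (htr : A.trace = 1)
    (hrow : ∀ x, (∑ y, A x y) = 0)
    (hexists : ∃ x y : Fin p × Fin q, A x y ≠ 0 ∧ x.1 ≠ y.1 ∧ x.2 ≠ y.2)
    (v : Fin p × Fin q)
    (hv : ∀ x y : Fin p × Fin q, A x y ≠ 0 → x.1 ≠ y.1 → x.2 ≠ y.2 → x = v ∨ y = v) :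
    ¬ SeparableStateR A :=
  stmt18_general A hsymm hoff hrow hexists v hv
end
end
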